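/- arXiv:2604.01217 — 2 statements merged into one kernel-verified Lean document; each statement's English description precedes it below -/
import Mathlib

section
/- For every bipartite quantum channel N: A'B'→AB, the conditional min-entropy satisfies S_∞[A|B]_N ≤ log|A|, and equality S_∞[A|B]_N = log|A| holds if and only if N is a conditional uniformly mixing channel, i.e., N = R^π ⊗ Q for some quantum channel Q: B'→B, where R^π(X) := tr(X)·1_A/|A|; equivalently, if and only if Φ^N = π_{R_A} ⊗ π_A ⊗ Φ^Q with π denoting the maximally mixed state. -/
open scoped ComplexOrder Kronecker
open Matrix

noncomputable section

/-- Square complex matrices indexed by `ι`. -/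
abbrev Mat (ι : Type) : Type := Matrix ι ι ℂ

/-- A quantum state: a positive semidefinite matrix of trace one. -/
def IsState {ι : Type} [Fintype ι] (ρ : Mat ι) : Prop :=
  ρ.PosSemidef ∧ ρ.trace = 1

/-- Max-relative entropy `D_∞(ρ‖σ) = log₂ inf {λ ≥ 0 : λ•σ − ρ ⪰ 0}` as an extended real;
it is `+∞` (`sInf ∅ = ⊤`) when no such `λ` exists. -/
def Dmax {ι : Type} [Fintype ι] (ρ σ : Mat ι) : EReal :=
  sInf {x : EReal | ∃ l : ℝ, 0 ≤ l ∧ ((l : ℂ) • σ - ρ).PosSemidef ∧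
    x = ((Real.logb 2 l : ℝ) : EReal)}

/-- Partial trace over the first tensor factor. -/
def trFst {ιA ιB : Type} [Fintype ιA] (ρ : Matrix (ιA × ιB) (ιA × ιB) ℂ) : Mat ιB :=
  Matrix.of fun i j => ∑ k : ιA, ρ (k, i) (k, j)

/-- Partial trace over the second tensor factor. -/
def trSnd {ιA ιB : Type} [Fintype ιB] (ρ : Matrix (ιA × ιB) (ιA × ιB) ℂ) : Mat ιA :=
  Matrix.of fun i j => ∑ k : ιB, ρ (i, k) (j, k)

/-- Conditional min-entropy `S_∞(A|B)_ρ := −inf over states σ on B of D_∞(ρ‖1_A⊗σ)`. -/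
def condMin {ιA ιB : Type} [Fintype ιA] [DecidableEq ιA] [Fintype ιB]
    (ρ : Matrix (ιA × ιB) (ιA × ιB) ℂ) : EReal :=
  -(⨅ σ : {σ : Mat ιB // IsState σ}, Dmax ρ ((1 : Mat ιA) ⊗ₖ σ.1))

/-- `S↓_∞(A|B)_ρ := −D_∞(ρ‖1_A⊗ρ_B)` with `ρ_B = tr_A ρ`. -/
def condMinDown {ιA ιB : Type} [Fintype ιA] [DecidableEq ιA] [Fintype ιB]
    (ρ : Matrix (ιA × ιB) (ιA × ιB) ℂ) : EReal :=
  -(Dmax ρ ((1 : Mat ιA) ⊗ₖ trFst ρ))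

/-- The (unnormalized) Choi matrix of a linear map of matrices. -/
def choiMatrix {ι κ : Type} [DecidableEq ι] (L : Mat ι →ₗ[ℂ] Mat κ) :
    Matrix (ι × κ) (ι × κ) ℂ :=
  Matrix.of fun p q => L (Matrix.single p.1 q.1 1) p.2 q.2

/-- A quantum channel: a linear map that is completely positive (positive semidefinite Choi
matrix) and trace preserving. -/
def IsChannel {ι κ : Type} [Fintype ι] [DecidableEq ι] [Fintype κ]
    (L : Mat ι →ₗ[ℂ] Mat κ) : Prop :=
  (choiMatrix L).PosSemidef ∧ ∀ X : Mat ι, (L X).trace = X.trace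

/-- The Choi state `Φ^L = (id⊗L)(Φ_d)` of a linear map of matrices. -/
def choiState {ι κ : Type} [Fintype ι] [DecidableEq ι] (L : Mat ι →ₗ[ℂ] Mat κ) :
    Matrix (ι × κ) (ι × κ) ℂ :=
  ((Fintype.card ι : ℂ))⁻¹ • choiMatrix L

/-- The Choi state of a bipartite channel `N : A'B' → AB`, re-indexed across
the cut `R_A A : R_B B`. -/
def biChoiState {ιA' ιB' κA κB : Type} [Fintype ιA'] [DecidableEq ιA']
    [Fintype ιB'] [DecidableEq ιB'] (N : Mat (ιA' × ιB') →ₗ[ℂ] Mat (κA × κB)) :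
    Matrix ((ιA' × κA) × (ιB' × κB)) ((ιA' × κA) × (ιB' × κB)) ℂ :=
  Matrix.of fun p q =>
    choiState N ((p.1.1, p.2.1), (p.1.2, p.2.2)) ((q.1.1, q.2.1), (q.1.2, q.2.2))

/-- Conditional min-entropy of a bipartite channel:
`S_∞[A|B]_N := −inf over channels Q : B'→B of D_∞(Φ^N ‖ 1_{R_A A} ⊗ Φ^Q) − log₂|A'|`. -/
def chanCondMin {ιA' ιB' κA κB : Type}
    [Fintype ιA'] [DecidableEq ιA'] [Fintype ιB'] [DecidableEq ιB']
    [Fintype κA] [DecidableEq κA] [Fintype κB] [DecidableEq κB]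
    (N : Mat (ιA' × ιB') →ₗ[ℂ] Mat (κA × κB)) : EReal :=
  (-(⨅ Q : {Q : Mat ιB' →ₗ[ℂ] Mat κB // IsChannel Q},
      Dmax (biChoiState N) ((1 : Mat (ιA' × κA)) ⊗ₖ choiState Q.1)))
    - ((Real.logb 2 (Fintype.card ιA' : ℝ) : ℝ) : EReal)

/-- Rank-one projector `|v⟩⟨v|` associated with a vector. -/
def outer {ι : Type} (v : ι → ℂ) : Mat ι := Matrix.vecMulVec v (star v)

/-- Vectorization `vec(V) := ∑ i, e_i ⊗ V e_i` of a matrix `V : ℂ^ι → ℂ^κ`. -/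
def vecRect {ι κ : Type} (V : Matrix κ ι ℂ) : ι × κ → ℂ := fun p => V p.2 p.1

/-- A maximally entangled state on `ι1 × ι2`: `|φ⟩⟨φ|` with
`|φ⟩ = (1/√d) ∑ i, e_i ⊗ f_i` for orthonormal families `e`, `f`, `d = min(|ι1|,|ι2|)`. -/
def IsMaxEntangled {ι1 ι2 : Type} [Fintype ι1] [Fintype ι2]
    (Φ : Matrix (ι1 × ι2) (ι1 × ι2) ℂ) : Prop :=
  ∃ (e : Fin (min (Fintype.card ι1) (Fintype.card ι2)) → ι1 → ℂ)
    (f : Fin (min (Fintype.card ι1) (Fintype.card ι2)) → ι2 → ℂ),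
    (∀ i j, ∑ x : ι1, (starRingEnd ℂ) (e i x) * e j x = if i = j then 1 else 0) ∧
    (∀ i j, ∑ x : ι2, (starRingEnd ℂ) (f i x) * f j x = if i = j then 1 else 0) ∧
    Φ = outer (fun p => (((Real.sqrt (min (Fintype.card ι1) (Fintype.card ι2) : ℝ))⁻¹ : ℝ) : ℂ) *
      ∑ i, e i p.1 * f i p.2)

/-- Partial transpose over the second tensor factor. -/
def ptransposeSnd {ιA ιB : Type} (ρ : Matrix (ιA × ιB) (ιA × ιB) ℂ) :
    Matrix (ιA × ιB) (ιA × ιB) ℂ :=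
  Matrix.of fun p q => ρ (p.1, q.2) (q.1, p.2)

/-- A bipartite state is PPT if its partial transpose is positive semidefinite. -/
def IsPPT {ιA ιB : Type} [Fintype ιA] [Fintype ιB]
    (ρ : Matrix (ιA × ιB) (ιA × ιB) ℂ) : Prop :=
  (ptransposeSnd ρ).PosSemidef

/-- Conjugation channel `X ↦ W X Wᴴ`. -/
def conjMap {ι κ : Type} [Fintype ι] (W : Matrix κ ι ℂ) : Mat ι →ₗ[ℂ] Mat κ where
  toFun X := W * X * Wᴴ
  map_add' X Y := by simp [Matrix.mul_add, Matrix.add_mul]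
  map_smul' c X := by simp [Matrix.mul_smul, Matrix.smul_mul]

/-- The controlled unitary matrix `∑ j, |j⟩⟨j| ⊗ U_j`. -/
def ctrlU {n m : ℕ} (U : Fin n → Mat (Fin m)) : Mat (Fin n × Fin m) :=
  Matrix.of fun p q => (if p.1 = q.1 then 1 else 0) * U p.1 p.2 q.2

/-- The replacer channel `X ↦ tr(X) • γ`. -/
def replacer {ι κ : Type} [Fintype ι] (γ : Mat κ) : Mat ι →ₗ[ℂ] Mat κ where
  toFun X := X.trace • γ
  map_add' X Y := by simp [Matrix.trace_add, add_smul]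
  map_smul' c X := by simp [Matrix.trace_smul, mul_smul]

/-- The maximally mixed state `π_m = 1_m / m`. -/
def uniformState (m : ℕ) : Mat (Fin m) := ((m : ℂ))⁻¹ • (1 : Mat (Fin m))

/-- Tensor product of two linear maps of matrices. -/
def tensorL {ι1 κ1 ι2 κ2 : Type} [Fintype ι1] [DecidableEq ι1]
    (L1 : Mat ι1 →ₗ[ℂ] Mat κ1) (L2 : Mat ι2 →ₗ[ℂ] Mat κ2) :
    Mat (ι1 × ι2) →ₗ[ℂ] Mat (κ1 × κ2) where
  toFun X := Matrix.of fun p q =>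
    ∑ i1 : ι1, ∑ j1 : ι1,
      L1 (Matrix.single i1 j1 1) p.1 q.1 *
        L2 (Matrix.of fun i2 j2 => X (i1, i2) (j1, j2)) p.2 q.2
  map_add' X Y := by
    ext p q
    have h : ∀ i1 j1 : ι1,
        (Matrix.of fun i2 j2 => X (i1, i2) (j1, j2) + Y (i1, i2) (j1, j2)) =
          (Matrix.of fun i2 j2 => X (i1, i2) (j1, j2)) +
            (Matrix.of fun i2 j2 => Y (i1, i2) (j1, j2)) := by
      intro i1 j1; ext i2 j2; simp
    simp only [Matrix.add_apply, Matrix.of_apply, h, map_add, mul_add,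
      Finset.sum_add_distrib]
  map_smul' c X := by
    ext p q
    have h : ∀ i1 j1 : ι1,
        (Matrix.of fun i2 j2 => c * X (i1, i2) (j1, j2)) =
          c • (Matrix.of fun i2 j2 => X (i1, i2) (j1, j2)) := by
      intro i1 j1; ext i2 j2; simp
    simp only [Matrix.smul_apply, smul_eq_mul, Matrix.of_apply, RingHom.id_apply, h,
      LinearMap.map_smul]
    rw [Finset.mul_sum]
    refine Finset.sum_congr rfl fun i1 _ => ?_
    rw [Finset.mul_sum]
    refine Finset.sum_congr rfl fun j1 _ => ?_
    ring


/-- Square root of a positive semidefinite matrix (junk value `0` otherwise). -/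
def matSqrt {ι : Type} [Fintype ι] [DecidableEq ι] (M : Mat ι) : Mat ι :=
  letI := Classical.dec M.PosSemidef
  if h : M.PosSemidef then
    (h.1.eigenvectorUnitary : Mat ι) *
      Matrix.diagonal (fun i => ((Real.sqrt (h.1.eigenvalues i) : ℝ) : ℂ)) *
      (star h.1.eigenvectorUnitary : Mat ι)
  else 0

/-- Trace norm `‖X‖₁ = tr √(XᴴX)`. -/
def traceNorm {ι : Type} [Fintype ι] [DecidableEq ι] (X : Mat ι) : ℝ :=
  (matSqrt (Xᴴ * X)).trace.re

/-- Fidelity `F(ρ,σ) = ‖√ρ√σ‖₁²`. -/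
def fidelity {ι : Type} [Fintype ι] [DecidableEq ι] (ρ σ : Mat ι) : ℝ :=
  (traceNorm (matSqrt ρ * matSqrt σ)) ^ 2

/-- Purified distance `P(ρ,σ) = √(1 − F(ρ,σ))`. -/
def purifiedDist {ι : Type} [Fintype ι] [DecidableEq ι] (ρ σ : Mat ι) : ℝ :=
  Real.sqrt (1 - fidelity ρ σ)

/-- Purified channel distance `P[N,M] = sup over states ψ of P((id⊗N)ψ, (id⊗M)ψ)`. -/
def purifiedChannelDist {ι κ : Type} [Fintype ι] [DecidableEq ι] [Fintype κ] [DecidableEq κ]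
    (L1 L2 : Mat ι →ₗ[ℂ] Mat κ) : ℝ :=
  ⨆ ψ : {ψ : Matrix (ι × ι) (ι × ι) ℂ // IsState ψ},
    purifiedDist (tensorL (LinearMap.id : Mat ι →ₗ[ℂ] Mat ι) L1 ψ.1)
      (tensorL (LinearMap.id : Mat ι →ₗ[ℂ] Mat ι) L2 ψ.1)

/-- Diamond norm `‖L‖◊ = sup over states ρ on R⊗in (R ≃ in) of ‖(id⊗L)ρ‖₁`. -/
def diamondNorm {ι κ : Type} [Fintype ι] [DecidableEq ι] [Fintype κ] [DecidableEq κ]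
    (L : Mat ι →ₗ[ℂ] Mat κ) : ℝ :=
  ⨆ ρ : {ρ : Matrix (ι × ι) (ι × ι) ℂ // IsState ρ},
    traceNorm (tensorL (LinearMap.id : Mat ι →ₗ[ℂ] Mat ι) L ρ.1)

/-- `−log₂ t`, as an extended real which is `+∞` for `t ≤ 0`. -/
def negLogE (t : ℝ) : EReal := if t ≤ 0 then ⊤ else ((-Real.logb 2 t : ℝ) : EReal)

/-- Hypothesis-testing relative entropy
`D_H^ε(ρ‖σ) = −log₂ inf{tr(Λσ) : 0 ≤ Λ ≤ 1, tr(Λρ) ≥ 1−ε}`. -/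
def DH {ι : Type} [Fintype ι] [DecidableEq ι] (ε : ℝ) (ρ σ : Mat ι) : EReal :=
  negLogE (sInf {t : ℝ | ∃ Λ : Mat ι, Λ.PosSemidef ∧ ((1 : Mat ι) - Λ).PosSemidef ∧
    1 - ε ≤ ((Λ * ρ).trace).re ∧ t = ((Λ * σ).trace).re})

/-- Channel hypothesis-testing relative entropy
`D_H^ε[N‖M] = sup over states ψ of D_H^ε((id⊗N)ψ‖(id⊗M)ψ)`. -/
def DHchan {ι κ : Type} [Fintype ι] [DecidableEq ι] [Fintype κ] [DecidableEq κ]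
    (ε : ℝ) (L1 L2 : Mat ι →ₗ[ℂ] Mat κ) : EReal :=
  ⨆ ψ : {ψ : Matrix (ι × ι) (ι × ι) ℂ // IsState ψ},
    DH ε (tensorL (LinearMap.id : Mat ι →ₗ[ℂ] Mat ι) L1 ψ.1)
      (tensorL (LinearMap.id : Mat ι →ₗ[ℂ] Mat ι) L2 ψ.1)

/-- Channel max-relative entropy `D_∞[N‖M] = D_∞(Φ^N‖Φ^M)`. -/
def DmaxChan {ι κ : Type} [Fintype ι] [DecidableEq ι] [Fintype κ]
    (L1 L2 : Mat ι →ₗ[ℂ] Mat κ) : EReal :=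
  Dmax (choiState L1) (choiState L2)

/-- Smoothed channel max-relative entropy
`D_∞^ε[N‖M] = inf{D_∞[Ñ‖M] : Ñ a channel with (1/2)P[N,Ñ] ≤ ε}`. -/
def DmaxChanSmooth {ι κ : Type} [Fintype ι] [DecidableEq ι] [Fintype κ] [DecidableEq κ]
    (ε : ℝ) (L1 L2 : Mat ι →ₗ[ℂ] Mat κ) : EReal :=
  ⨅ Nt : {Nt : Mat ι →ₗ[ℂ] Mat κ //
      IsChannel Nt ∧ 2⁻¹ * purifiedChannelDist L1 Nt ≤ ε},
    DmaxChan Nt.1 L2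

/-- A quantum superchannel: `Θ(N) = post ∘ (id_E ⊗ N) ∘ pre` for channels `pre`, `post`
and a finite-dimensional memory `E`. -/
structure Superchannel (ι1 κ1 ι2 κ2 : Type) [Fintype ι1] [DecidableEq ι1]
    [Fintype κ1] [DecidableEq κ1] [Fintype ι2] [DecidableEq ι2]
    [Fintype κ2] [DecidableEq κ2] where
  e : ℕ
  pre : Mat ι2 →ₗ[ℂ] Mat (Fin e × ι1)
  post : Mat (Fin e × κ1) →ₗ[ℂ] Mat κ2
  pre_channel : IsChannel pre
  post_channel : IsChannel post

/-- Action of a superchannel on a linear map. -/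
def Superchannel.apply {ι1 κ1 ι2 κ2 : Type} [Fintype ι1] [DecidableEq ι1]
    [Fintype κ1] [DecidableEq κ1] [Fintype ι2] [DecidableEq ι2]
    [Fintype κ2] [DecidableEq κ2] (Θ : Superchannel ι1 κ1 ι2 κ2)
    (L : Mat ι1 →ₗ[ℂ] Mat κ1) : Mat ι2 →ₗ[ℂ] Mat κ2 :=
  Θ.post ∘ₗ (tensorL (LinearMap.id : Mat (Fin Θ.e) →ₗ[ℂ] Mat (Fin Θ.e)) L) ∘ₗ Θ.pre


/-- A conditional Gibbs-preserving superchannel (distillation direction): it maps every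
conditionally thermalizing channel `T^β ⊗ Q̃` to a conditionally uniformly mixing channel
`R^π_m ⊗ Q̃'` for some side channel `Q̃'`. -/
def IsCGPSdist {a' b' a b m d' d : ℕ} (γ : Mat (Fin a))
    (Θ : Superchannel (Fin a' × Fin b') (Fin a × Fin b) (Fin m × Fin d') (Fin m × Fin d)) :
    Prop :=
  ∀ Qt : Mat (Fin b') →ₗ[ℂ] Mat (Fin b), IsChannel Qt →
    ∃ Qt' : Mat (Fin d') →ₗ[ℂ] Mat (Fin d), IsChannel Qt' ∧
      Θ.apply (tensorL (replacer γ) Qt) = tensorL (replacer (uniformState m)) Qt'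

/-- A conditional Gibbs-preserving superchannel (formation direction): it maps every
conditionally uniformly mixing channel `R^π_m ⊗ Q̃` to a conditionally thermalizing channel
`T^β ⊗ Q̃'` for some side channel `Q̃'`. -/
def IsCGPScost {a' b' a b m d' d : ℕ} (γ : Mat (Fin a))
    (Θ : Superchannel (Fin m × Fin d') (Fin m × Fin d) (Fin a' × Fin b') (Fin a × Fin b)) :
    Prop :=
  ∀ Qt : Mat (Fin d') →ₗ[ℂ] Mat (Fin d), IsChannel Qt →
    ∃ Qt' : Mat (Fin b') →ₗ[ℂ] Mat (Fin b), IsChannel Qt' ∧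
      Θ.apply (tensorL (replacer (uniformState m)) Qt) = tensorL (replacer γ) Qt'

/-- One-shot conditional athermality distillation yield `Dist^{(1,ε)}(N, T^β)`:
the worst case over side channels `Q` of the largest `log₂ m` such that some conditional
Gibbs-preserving superchannel converts `(N, T^β⊗Q)` into `(id_m⊗Q', R^π_m⊗Q')`
within purified channel distance `ε`. -/
def DistOneShot {a' b' a b : ℕ} (N : Mat (Fin a' × Fin b') →ₗ[ℂ] Mat (Fin a × Fin b))
    (γ : Mat (Fin a)) (ε : ℝ) : EReal :=
  ⨅ Q : {Q : Mat (Fin b') →ₗ[ℂ] Mat (Fin b) // IsChannel Q},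
    sSup {x : EReal | ∃ m d' d : ℕ, ∃ Q' : Mat (Fin d') →ₗ[ℂ] Mat (Fin d),
      ∃ Θ : Superchannel (Fin a' × Fin b') (Fin a × Fin b) (Fin m × Fin d') (Fin m × Fin d),
        IsChannel Q' ∧ IsCGPSdist γ Θ ∧
        Θ.apply (tensorL (replacer γ) Q.1) = tensorL (replacer (uniformState m)) Q' ∧
        purifiedChannelDist
          (tensorL (LinearMap.id : Mat (Fin m) →ₗ[ℂ] Mat (Fin m)) Q') (Θ.apply N) ≤ ε ∧
        x = ((Real.logb 2 (m : ℝ) : ℝ) : EReal)}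

/-- One-shot conditional athermality formation cost `Cost^{(1,ε)}(N, T^β)`:
the best case over side channels `Q` of the least `log₂ m` such that some conditional
Gibbs-preserving superchannel converts `(id_m⊗Q'', R^π_m⊗Q'')` into `(N, T^β⊗Q)`
within purified channel distance `ε`. -/
def CostOneShot {a' b' a b : ℕ} (N : Mat (Fin a' × Fin b') →ₗ[ℂ] Mat (Fin a × Fin b))
    (γ : Mat (Fin a)) (ε : ℝ) : EReal :=
  ⨅ Q : {Q : Mat (Fin b') →ₗ[ℂ] Mat (Fin b) // IsChannel Q},
    sInf {x : EReal | ∃ m d' d : ℕ, ∃ Q'' : Mat (Fin d') →ₗ[ℂ] Mat (Fin d),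
      ∃ Θ : Superchannel (Fin m × Fin d') (Fin m × Fin d) (Fin a' × Fin b') (Fin a × Fin b),
        IsChannel Q'' ∧ IsCGPScost γ Θ ∧
        Θ.apply (tensorL (replacer (uniformState m)) Q'') = tensorL (replacer γ) Q.1 ∧
        purifiedChannelDist N
          (Θ.apply (tensorL (LinearMap.id : Mat (Fin m) →ₗ[ℂ] Mat (Fin m)) Q'')) ≤ ε ∧
        x = ((Real.logb 2 (m : ℝ) : ℝ) : EReal)}


/-- A bipartite channel `N : A'B' → AB` is no-signaling (semicausal) from `A'` to `B`:
`tr_A ∘ N = tr_{A'} ⊗ Q` for some channel `Q : B' → B`. -/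
def NoSignalFstToSnd {ιA' ιB' κA κB : Type} [Fintype ιA'] [DecidableEq ιA']
    [Fintype ιB'] [DecidableEq ιB'] [Fintype κA] [Fintype κB]
    (N : Mat (ιA' × ιB') →ₗ[ℂ] Mat (κA × κB)) : Prop :=
  ∃ Q : Mat ιB' →ₗ[ℂ] Mat κB, IsChannel Q ∧
    ∀ X : Mat (ιA' × ιB'), trFst (N X) = Q (trFst X)

end

/-!
If `N` is a channel, `ρ := Φ^N` is a state, while `1_{R_A A} ⊗ Φ^Q` has trace `|A'||A|` for every
channel `Q`; comparing traces in `λ (1 ⊗ Φ^Q) ⪰ ρ` gives `λ ≥ 1/(|A'||A|)`, which is the bound.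
Equality is attained by `R^π ⊗ Q`, whose Choi state is exactly `(1 ⊗ Φ^Q)/(|A'||A|)`.
Conversely, at equality there are `λ ↓ 1/(|A'||A|)` with positive gaps `K = λ (1 ⊗ Φ^Q) − ρ` of
trace `λ|A'||A| − 1 → 0`. The identity
`ρ − (1 ⊗ tr_{R_A A} ρ)/(|A'||A|) = (1 ⊗ tr_{R_A A} K)/(|A'||A|) − K`, whose right side has entries
bounded by `2 tr K`, then forces `ρ = π ⊗ J` with `J = tr_{R_A A} ρ`, the Choi state of a channel.
-/

section PartialTrace

variable {ι κ : Type}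

lemma trFst_eq_sum_submatrix [Fintype ι] (ρ : Matrix (ι × κ) (ι × κ) ℂ) :
    trFst ρ = ∑ k : ι, ρ.submatrix (Prod.mk k) (Prod.mk k) := by
  ext i j
  simp [trFst, Matrix.sum_apply]

lemma Matrix.PosSemidef.trFst [Fintype ι] {ρ : Matrix (ι × κ) (ι × κ) ℂ} (hρ : ρ.PosSemidef) :
    (trFst ρ).PosSemidef := by
  rw [trFst_eq_sum_submatrix]
  exact posSemidef_sum _ fun k _ => hρ.submatrix _

lemma trFst_sub [Fintype ι] (ρ σ : Matrix (ι × κ) (ι × κ) ℂ) :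
    trFst (ρ - σ) = trFst ρ - trFst σ := by
  ext i j
  simp [trFst, Finset.sum_sub_distrib]

lemma trFst_smul [Fintype ι] (r : ℂ) (ρ : Matrix (ι × κ) (ι × κ) ℂ) :
    trFst (r • ρ) = r • trFst ρ := by
  ext i j
  simp [trFst, Finset.mul_sum]

lemma trFst_one_kronecker [Fintype ι] [DecidableEq ι] (J : Mat κ) :
    trFst ((1 : Mat ι) ⊗ₖ J) = (Fintype.card ι : ℂ) • J := by
  ext i j
  simp [trFst, one_apply]

lemma trFst_one [Fintype ι] [DecidableEq ι] [DecidableEq κ] :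
    trFst (1 : Mat (ι × κ)) = (Fintype.card ι : ℂ) • (1 : Mat κ) := by
  rw [← one_kronecker_one, trFst_one_kronecker]

lemma trSnd_smul [Fintype κ] (r : ℂ) (ρ : Matrix (ι × κ) (ι × κ) ℂ) :
    trSnd (r • ρ) = r • trSnd ρ := by
  ext i j
  simp [trSnd, Finset.mul_sum]

variable [Fintype ι] [Fintype κ]

lemma trace_trFst (ρ : Matrix (ι × κ) (ι × κ) ℂ) : (trFst ρ).trace = ρ.trace := by
  simp [trace, trFst, Fintype.sum_prod_type, Finset.sum_comm (γ := ι)]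

lemma trace_trSnd (ρ : Matrix (ι × κ) (ι × κ) ℂ) : (trSnd ρ).trace = ρ.trace := by
  simp [trace, trSnd, Fintype.sum_prod_type]

end PartialTrace

section PosSemidef

variable {ι : Type} [Fintype ι]

lemma Matrix.PosSemidef.re_apply_le_trace {K : Mat ι} (hK : K.PosSemidef) (p : ι) :
    (K p p).re ≤ K.trace.re := by
  rw [trace, Complex.re_sum]
  exact Finset.single_le_sum (f := fun i => (K i i).re)
    (fun i _ => (Complex.nonneg_iff.mp hK.diag_nonneg).1) (Finset.mem_univ p)

lemma Matrix.PosSemidef.norm_apply_le_trace {K : Mat ι} (hK : K.PosSemidef) (p q : ι) :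
    ‖K p q‖ ≤ K.trace.re := by
  have hdet := (hK.submatrix ![p, q]).det_nonneg
  have hqp : K q p = star (K p q) := by simpa using congrFun (congrFun hK.1.eq.symm q) p
  simp only [det_fin_two, submatrix_apply, Matrix.cons_val_zero, Matrix.cons_val_one, hqp,
    Complex.star_def, Complex.mul_conj] at hdet
  have hre := (Complex.nonneg_iff.mp hdet).1
  have hp := Complex.nonneg_iff.mp (hK.diag_nonneg (i := p))
  have hq := (Complex.nonneg_iff.mp (hK.diag_nonneg (i := q))).1
  simp only [Complex.sub_re, Complex.mul_re, ← hp.2, Complex.ofReal_re, ← Complex.sq_norm] at hre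
  nlinarith [norm_nonneg (K p q), hK.re_apply_le_trace p, hK.re_apply_le_trace q]

end PosSemidef

section ProductDefect

variable {ι κ : Type} [Fintype ι] [DecidableEq ι] [Nonempty ι]

lemma sub_smul_one_kronecker_trFst (ρ : Matrix (ι × κ) (ι × κ) ℂ) (J : Mat κ) (l : ℂ) :
    ρ - (Fintype.card ι : ℂ)⁻¹ • ((1 : Mat ι) ⊗ₖ trFst ρ) =
      (Fintype.card ι : ℂ)⁻¹ • ((1 : Mat ι) ⊗ₖ trFst (l • ((1 : Mat ι) ⊗ₖ J) - ρ)) -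
        (l • ((1 : Mat ι) ⊗ₖ J) - ρ) := by
  have hn : (Fintype.card ι : ℂ) ≠ 0 := Nat.cast_ne_zero.mpr Fintype.card_ne_zero
  rw [trFst_sub, trFst_smul, trFst_one_kronecker]
  ext ⟨i, k⟩ ⟨j, m⟩
  simp only [Matrix.sub_apply, Matrix.smul_apply, kronecker_apply, smul_eq_mul]
  field_simp
  ring

lemma eq_smul_one_kronecker_trFst_of_forall_lt [Fintype κ] {ρ : Matrix (ι × κ) (ι × κ) ℂ}
    (hρ : ρ.trace = 1)
    (h : ∀ μ > (Fintype.card ι : ℝ)⁻¹, ∃ l < μ, ∃ J : Mat κ, J.trace = 1 ∧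
      ((l : ℂ) • ((1 : Mat ι) ⊗ₖ J) - ρ).PosSemidef) :
    ρ = (Fintype.card ι : ℂ)⁻¹ • ((1 : Mat ι) ⊗ₖ trFst ρ) := by
  have hn : (0 : ℝ) < Fintype.card ι := Nat.cast_pos.mpr Fintype.card_pos
  rw [← sub_eq_zero]
  ext p q
  rw [Matrix.zero_apply, ← norm_le_zero_iff]
  refine le_of_forall_pos_le_add fun ε hε => ?_
  obtain ⟨l, hl, J, hJ, hK⟩ := h ((Fintype.card ι : ℝ)⁻¹ + ε / (2 * Fintype.card ι)) (by
    have : 0 < ε / (2 * Fintype.card ι) := by positivity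
    linarith)
  rw [sub_smul_one_kronecker_trFst ρ J l]
  set K := (l : ℂ) • ((1 : Mat ι) ⊗ₖ J) - ρ
  have hK' : ((Fintype.card ι : ℂ)⁻¹ • ((1 : Mat ι) ⊗ₖ trFst K)).PosSemidef :=
    (PosSemidef.one.kronecker hK.trFst).smul (by positivity)
  have htrK' : ((Fintype.card ι : ℂ)⁻¹ • ((1 : Mat ι) ⊗ₖ trFst K)).trace = K.trace := by
    rw [trace_smul, trace_kronecker, trace_one, trace_trFst, smul_eq_mul, ← mul_assoc,
      inv_mul_cancel₀ (by exact_mod_cast hn.ne'), one_mul]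
  have htrK : K.trace.re = l * Fintype.card ι - 1 := by
    simp [K, trace_sub, trace_kronecker, hJ, hρ]
  calc ‖(_ - K) p q‖
      ≤ ‖((Fintype.card ι : ℂ)⁻¹ • ((1 : Mat ι) ⊗ₖ trFst K)) p q‖ + ‖K p q‖ := norm_sub_le _ _
    _ ≤ K.trace.re + K.trace.re := by
        gcongr
        · exact htrK' ▸ hK'.norm_apply_le_trace p q
        · exact hK.norm_apply_le_trace p q
    _ ≤ 0 + ε := by
        rw [htrK]
        have := mul_lt_mul_of_pos_right hl hn
        field_simp at this
        linarith

end ProductDefect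

section MaxRelativeEntropy

variable {ι : Type} [Fintype ι]

lemma one_le_mul_of_posSemidef_smul_sub {ρ σ : Mat ι} {l s : ℝ} (hρ : ρ.trace = 1)
    (hσ : σ.trace = s) (h : ((l : ℂ) • σ - ρ).PosSemidef) : 1 ≤ l * s := by
  have := (Complex.nonneg_iff.mp h.trace_nonneg).1
  simp only [trace_sub, trace_smul, hσ, hρ, smul_eq_mul, Complex.sub_re, Complex.one_re] at this
  norm_cast at this
  linarith

lemma logb_inv_le_Dmax {ρ σ : Mat ι} {s : ℝ} (hs : 0 < s) (hρ : ρ.trace = 1)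
    (hσ : σ.trace = s) : ((Real.logb 2 s⁻¹ : ℝ) : EReal) ≤ Dmax ρ σ := by
  refine le_sInf ?_
  rintro _ ⟨l, -, h, rfl⟩
  have hl : s⁻¹ ≤ l :=
    (inv_le_iff_one_le_mul₀ hs).mpr (one_le_mul_of_posSemidef_smul_sub hρ hσ h)
  exact EReal.coe_le_coe_iff.mpr (Real.logb_le_logb_of_le one_lt_two (inv_pos.mpr hs) hl)

lemma Dmax_le_logb {ρ σ : Mat ι} {l : ℝ} (hl : 0 ≤ l) (h : ((l : ℂ) • σ - ρ).PosSemidef) :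
    Dmax ρ σ ≤ ((Real.logb 2 l : ℝ) : EReal) :=
  sInf_le ⟨l, hl, h, rfl⟩

lemma exists_lt_of_Dmax_lt_logb {ρ σ : Mat ι} {μ : ℝ} (hμ : 0 < μ)
    (h : Dmax ρ σ < ((Real.logb 2 μ : ℝ) : EReal)) :
    ∃ l < μ, ((l : ℂ) • σ - ρ).PosSemidef := by
  obtain ⟨_, ⟨l, hl, hPSD, rfl⟩, hlt⟩ := sInf_lt_iff.mp h
  refine ⟨l, ?_, hPSD⟩
  rcases hl.eq_or_lt with rfl | hl
  · exact hμ
  · exact (Real.logb_lt_logb_iff one_lt_two hl hμ).mp (EReal.coe_lt_coe_iff.mp hlt)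

end MaxRelativeEntropy

lemma EReal.neg_sub_coe_le_coe_iff {x : EReal} {r t : ℝ} :
    -x - r ≤ t ↔ ((-(t + r) : ℝ) : EReal) ≤ x := by
  induction x using EReal.rec with
  | bot => simp
  | top => simp
  | coe x => norm_cast; constructor <;> intro <;> linarith

lemma EReal.neg_sub_coe_eq_coe_iff {x : EReal} {r t : ℝ} :
    -x - r = t ↔ x = ((-(t + r) : ℝ) : EReal) := by
  induction x using EReal.rec with
  | bot => simpa using (EReal.coe_ne_bot (-(t + r))).symm
  | top => simpa using (EReal.coe_ne_top (-(t + r))).symm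
  | coe x => norm_cast; constructor <;> intro <;> linarith

section Choi

variable {ι κ : Type} [Fintype ι] [DecidableEq ι]

lemma choiMatrix_injective : Function.Injective (choiMatrix : (Mat ι →ₗ[ℂ] Mat κ) → _) := by
  intro L M h
  refine Matrix.ext_linearMap ℂ fun i j => LinearMap.ext_ring ?_
  ext k l
  exact congrFun (congrFun h (i, k)) (j, l)

lemma choiState_injective [Nonempty ι] :
    Function.Injective (choiState : (Mat ι →ₗ[ℂ] Mat κ) → _) :=
  fun _ _ h => choiMatrix_injective <| smul_right_injective _
    (inv_ne_zero (Nat.cast_ne_zero.mpr Fintype.card_ne_zero) : (Fintype.card ι : ℂ)⁻¹ ≠ 0) h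

def ofChoiMatrix (C : Matrix (ι × κ) (ι × κ) ℂ) : Mat ι →ₗ[ℂ] Mat κ :=
  liftLinear ℂ fun i j => LinearMap.toSpanSingleton ℂ _ (of fun k l => C (i, k) (j, l))

lemma choiMatrix_ofChoiMatrix (C : Matrix (ι × κ) (ι × κ) ℂ) :
    choiMatrix (ofChoiMatrix C) = C := by
  ext ⟨i, k⟩ ⟨j, l⟩
  simp [choiMatrix, ofChoiMatrix]

lemma trace_single_one (i j : ι) : (single i j (1 : ℂ)).trace = (1 : Mat ι) i j := by
  by_cases hij : i = j
  · subst hij; simp [trace_single_eq_same]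
  · simp [trace_single_eq_of_ne _ _ _ hij, hij]

lemma choiState_replacer (γ : Mat κ) :
    choiState (replacer γ : Mat ι →ₗ[ℂ] Mat κ) =
      (Fintype.card ι : ℂ)⁻¹ • ((1 : Mat ι) ⊗ₖ γ) := by
  ext ⟨i, k⟩ ⟨j, l⟩
  simp [choiState, choiMatrix, replacer, trace_single_one]

variable [Fintype κ]

lemma trSnd_choiMatrix {L : Mat ι →ₗ[ℂ] Mat κ} (hL : ∀ X, (L X).trace = X.trace) :
    trSnd (choiMatrix L) = 1 := by
  ext i j
  exact (hL (single i j 1)).trans (trace_single_one i j)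

lemma trSnd_choiState {L : Mat ι →ₗ[ℂ] Mat κ} (hL : ∀ X, (L X).trace = X.trace) :
    trSnd (choiState L) = (Fintype.card ι : ℂ)⁻¹ • 1 := by
  rw [choiState, trSnd_smul, trSnd_choiMatrix hL]

lemma trace_choiState [Nonempty ι] {L : Mat ι →ₗ[ℂ] Mat κ} (hL : ∀ X, (L X).trace = X.trace) :
    (choiState L).trace = 1 := by
  rw [← trace_trSnd, trSnd_choiState hL, trace_smul, trace_one, smul_eq_mul,
    inv_mul_cancel₀ (Nat.cast_ne_zero.mpr Fintype.card_ne_zero)]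

lemma IsChannel.posSemidef_choiState {L : Mat ι →ₗ[ℂ] Mat κ} (hL : IsChannel L) :
    (choiState L).PosSemidef :=
  hL.1.smul (by positivity)

lemma isChannel_ofChoiMatrix {C : Matrix (ι × κ) (ι × κ) ℂ} (hC : C.PosSemidef)
    (htr : trSnd C = 1) : IsChannel (ofChoiMatrix C) := by
  refine ⟨(choiMatrix_ofChoiMatrix C).symm ▸ hC, fun X => ?_⟩
  have : traceLinearMap κ ℂ ℂ ∘ₗ ofChoiMatrix C = traceLinearMap ι ℂ ℂ := by
    refine Matrix.ext_linearMap ℂ fun i j => LinearMap.ext_ring ?_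
    simp only [LinearMap.comp_apply, singleLinearMap_apply, traceLinearMap_apply, ofChoiMatrix,
      liftLinear_single, LinearMap.toSpanSingleton_apply, one_smul, trace_single_one, ← htr]
    rfl
  exact LinearMap.congr_fun this X

lemma exists_isChannel_choiState_eq [Nonempty ι] {J : Matrix (ι × κ) (ι × κ) ℂ}
    (hJ : J.PosSemidef) (htr : trSnd J = (Fintype.card ι : ℂ)⁻¹ • 1) :
    ∃ Q : Mat ι →ₗ[ℂ] Mat κ, IsChannel Q ∧ choiState Q = J := by
  have hn : (Fintype.card ι : ℂ) ≠ 0 := Nat.cast_ne_zero.mpr Fintype.card_ne_zero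
  refine ⟨ofChoiMatrix ((Fintype.card ι : ℂ) • J),
    isChannel_ofChoiMatrix (hJ.smul (by positivity)) ?_, ?_⟩
  · rw [trSnd_smul, htr, smul_smul, mul_inv_cancel₀ hn, one_smul]
  · rw [choiState, choiMatrix_ofChoiMatrix, smul_smul, inv_mul_cancel₀ hn, one_smul]

end Choi

section BipartiteChoi

variable {ιA' ιB' κA κB : Type} [Fintype ιA'] [DecidableEq ιA'] [DecidableEq ιB']

lemma tensorL_single {κ₁ κ₂ : Type} (L₁ : Mat ιA' →ₗ[ℂ] Mat κ₁) (L₂ : Mat ιB' →ₗ[ℂ] Mat κ₂)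
    (i₁ j₁ : ιA') (i₂ j₂ : ιB') :
    tensorL L₁ L₂ (single (i₁, i₂) (j₁, j₂) 1) = L₁ (single i₁ j₁ 1) ⊗ₖ L₂ (single i₂ j₂ 1) := by
  have h : ∀ p q : ιA', (of fun x y => single (i₁, i₂) (j₁, j₂) (1 : ℂ) (p, x) (q, y)) =
      single i₁ j₁ (1 : ℂ) p q • single i₂ j₂ 1 := by
    intro p q
    ext x y
    rw [← mul_one (1 : ℂ), ← single_kronecker_single]
    simp
  ext ⟨k₁, k₂⟩ ⟨l₁, l₂⟩
  change ∑ p, ∑ q, L₁ (single p q 1) k₁ l₁ * L₂ (of fun x y => _) k₂ l₂ = _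
  simp only [h, map_smul, Matrix.smul_apply, smul_eq_mul]
  simp [single_apply, ite_and]

variable [Fintype ιB']

lemma biChoiState_injective [Nonempty ιA'] [Nonempty ιB'] :
    Function.Injective (biChoiState : (Mat (ιA' × ιB') →ₗ[ℂ] Mat (κA × κB)) → _) := by
  intro N M h
  refine choiState_injective (ext fun p q => ?_)
  exact congrFun (congrFun h ((Equiv.prodProdProdComm ιA' κA ιB' κB).symm p))
    ((Equiv.prodProdProdComm ιA' κA ιB' κB).symm q)

lemma biChoiState_tensorL (L₁ : Mat ιA' →ₗ[ℂ] Mat κA) (L₂ : Mat ιB' →ₗ[ℂ] Mat κB) :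
    biChoiState (tensorL L₁ L₂) = choiState L₁ ⊗ₖ choiState L₂ := by
  ext ⟨⟨i₁, k₁⟩, ⟨i₂, k₂⟩⟩ ⟨⟨j₁, l₁⟩, ⟨j₂, l₂⟩⟩
  simp [biChoiState, choiState, choiMatrix, tensorL_single, Fintype.card_prod]
  ring

variable [Fintype κA] [Fintype κB]

lemma IsChannel.posSemidef_biChoiState {N : Mat (ιA' × ιB') →ₗ[ℂ] Mat (κA × κB)}
    (hN : IsChannel N) : (biChoiState N).PosSemidef :=
  hN.posSemidef_choiState.submatrix _

lemma trace_biChoiState (N : Mat (ιA' × ιB') →ₗ[ℂ] Mat (κA × κB)) :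
    (biChoiState N).trace = (choiState N).trace :=
  Equiv.sum_comp (Equiv.prodProdProdComm ιA' κA ιB' κB) fun p => choiState N p p

lemma trSnd_trFst_biChoiState_eq_trFst_trSnd (N : Mat (ιA' × ιB') →ₗ[ℂ] Mat (κA × κB)) :
    trSnd (trFst (biChoiState N)) = trFst (trSnd (choiState N)) := by
  ext i j
  simp only [trSnd, trFst, biChoiState, of_apply, Fintype.sum_prod_type]
  rw [Finset.sum_comm]
  exact Finset.sum_congr rfl fun _ _ => Finset.sum_comm

lemma trSnd_trFst_biChoiState [Nonempty ιA'] {N : Mat (ιA' × ιB') →ₗ[ℂ] Mat (κA × κB)}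
    (hN : ∀ X, (N X).trace = X.trace) :
    trSnd (trFst (biChoiState N)) = (Fintype.card ιB' : ℂ)⁻¹ • 1 := by
  have hn : (Fintype.card ιA' : ℂ) ≠ 0 := Nat.cast_ne_zero.mpr Fintype.card_ne_zero
  rw [trSnd_trFst_biChoiState_eq_trFst_trSnd, trSnd_choiState hN, trFst_smul, trFst_one,
    smul_smul, Fintype.card_prod, Nat.cast_mul]
  field_simp

end BipartiteChoi

section UniformlyMixing

variable {ιA' ιB' κB : Type} [Fintype ιA'] [DecidableEq ιA'] [Fintype ιB'] [DecidableEq ιB']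

lemma biChoiState_tensorL_replacer_uniformState {a : ℕ} (Q : Mat ιB' →ₗ[ℂ] Mat κB) :
    biChoiState (tensorL (replacer (uniformState a) : Mat ιA' →ₗ[ℂ] _) Q) =
      (Fintype.card (ιA' × Fin a) : ℂ)⁻¹ • ((1 : Mat (ιA' × Fin a)) ⊗ₖ choiState Q) := by
  rw [biChoiState_tensorL, choiState_replacer, uniformState, kronecker_smul, smul_kronecker,
    smul_kronecker, one_kronecker_one, smul_smul]
  simp [mul_comm]

variable [Nonempty ιA'] [Nonempty ιB'] [Fintype κB]

lemma logb_inv_card_le_Dmax_biChoiState {κA : Type} [Fintype κA] [DecidableEq κA] [Nonempty κA]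
    {N : Mat (ιA' × ιB') →ₗ[ℂ] Mat (κA × κB)} (hN : IsChannel N)
    {Q : Mat ιB' →ₗ[ℂ] Mat κB} (hQ : IsChannel Q) :
    ((Real.logb 2 (Fintype.card (ιA' × κA) : ℝ)⁻¹ : ℝ) : EReal) ≤
      Dmax (biChoiState N) ((1 : Mat (ιA' × κA)) ⊗ₖ choiState Q) := by
  refine logb_inv_le_Dmax (Nat.cast_pos.mpr Fintype.card_pos)
    ((trace_biChoiState N).trans (trace_choiState hN.2)) ?_
  rw [trace_kronecker, trace_one, trace_choiState hQ.2, mul_one, Complex.ofReal_natCast]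

lemma exists_eq_tensorL_replacer_of_iInf_Dmax_eq {a : ℕ} [NeZero a]
    {N : Mat (ιA' × ιB') →ₗ[ℂ] Mat (Fin a × κB)} (hN : IsChannel N)
    (h : ⨅ Q : {Q : Mat ιB' →ₗ[ℂ] Mat κB // IsChannel Q},
        Dmax (biChoiState N) ((1 : Mat (ιA' × Fin a)) ⊗ₖ choiState Q.1) =
      ((Real.logb 2 (Fintype.card (ιA' × Fin a) : ℝ)⁻¹ : ℝ) : EReal)) :
    ∃ Q : Mat ιB' →ₗ[ℂ] Mat κB, IsChannel Q ∧ N = tensorL (replacer (uniformState a)) Q := by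
  have hs : (0 : ℝ) < Fintype.card (ιA' × Fin a) := Nat.cast_pos.mpr Fintype.card_pos
  obtain ⟨Q, hQ, hQρ⟩ := exists_isChannel_choiState_eq hN.posSemidef_biChoiState.trFst
    (trSnd_trFst_biChoiState hN.2)
  refine ⟨Q, hQ, biChoiState_injective ?_⟩
  rw [biChoiState_tensorL_replacer_uniformState, hQρ]
  refine eq_smul_one_kronecker_trFst_of_forall_lt
    ((trace_biChoiState N).trans (trace_choiState hN.2)) fun μ hμ => ?_
  obtain ⟨Q, hQμ⟩ := iInf_lt_iff.mp <| h ▸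
    EReal.coe_lt_coe_iff.mpr (Real.logb_lt_logb one_lt_two (inv_pos.mpr hs) hμ)
  obtain ⟨l, hl, hlρ⟩ := exists_lt_of_Dmax_lt_logb ((inv_pos.mpr hs).trans hμ) hQμ
  exact ⟨l, hl, choiState Q.1, trace_choiState Q.2.2, hlρ⟩

end UniformlyMixing

theorem conditional_channel_min_entropy_maximal_iff_uniformly_mixing_general
    {a' b' a b : ℕ} [NeZero a'] [NeZero b'] [NeZero a]
    (N : Mat (Fin a' × Fin b') →ₗ[ℂ] Mat (Fin a × Fin b)) (hN : IsChannel N) :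
    chanCondMin N ≤ ((Real.logb 2 (a : ℝ) : ℝ) : EReal) ∧
    (chanCondMin N = ((Real.logb 2 (a : ℝ) : ℝ) : EReal) ↔
      ∃ Q : Mat (Fin b') →ₗ[ℂ] Mat (Fin b), IsChannel Q ∧
        N = tensorL (replacer (uniformState a)) Q) := by
  have hlow := le_iInf fun Q : {Q : Mat (Fin b') →ₗ[ℂ] Mat (Fin b) // IsChannel Q} =>
    logb_inv_card_le_Dmax_biChoiState hN Q.2
  have hlog : -(Real.logb 2 a + Real.logb 2 a') =
      Real.logb 2 (Fintype.card (Fin a' × Fin a) : ℝ)⁻¹ := by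
    rw [Real.logb_inv, Fintype.card_prod, Fintype.card_fin, Fintype.card_fin, Nat.cast_mul,
      Real.logb_mul (Nat.cast_ne_zero.mpr (NeZero.ne a')) (Nat.cast_ne_zero.mpr (NeZero.ne a)),
      add_comm]
  rw [chanCondMin, Fintype.card_fin, EReal.neg_sub_coe_le_coe_iff,
    EReal.neg_sub_coe_eq_coe_iff, hlog]
  refine ⟨hlow, exists_eq_tensorL_replacer_of_iInf_Dmax_eq hN, ?_⟩
  rintro ⟨Q, hQ, rfl⟩
  refine le_antisymm (iInf_le_of_le ⟨Q, hQ⟩ (Dmax_le_logb (by positivity) ?_)) hlow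
  rw [biChoiState_tensorL_replacer_uniformState, Complex.ofReal_inv, Complex.ofReal_natCast,
    sub_self]
  exact PosSemidef.zero

/-- For every bipartite channel `N : A'B' → AB`, `S_∞[A|B]_N ≤ log|A|`,
with equality iff `N` is a conditional uniformly mixing channel, i.e. `N = R^π ⊗ Q`
for some channel `Q : B' → B`, where `R^π(X) = tr(X)·1_A/|A|`. -/
theorem conditional_channel_min_entropy_maximal_iff_uniformly_mixing
    {a' b' a b : ℕ} [NeZero a'] [NeZero b'] [NeZero a] [NeZero b]
    (N : Mat (Fin a' × Fin b') →ₗ[ℂ] Mat (Fin a × Fin b)) (hN : IsChannel N) :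
    chanCondMin N ≤ ((Real.logb 2 (a : ℝ) : ℝ) : EReal) ∧
    (chanCondMin N = ((Real.logb 2 (a : ℝ) : ℝ) : EReal) ↔
      ∃ Q : Mat (Fin b') →ₗ[ℂ] Mat (Fin b), IsChannel Q ∧
        N = tensorL (replacer (uniformState a)) Q) :=
  conditional_channel_min_entropy_maximal_iff_uniformly_mixing_general N hN
end

section
/- Let C_U := ∑_{j=1}^{n} |j⟩⟨j| ⊗ U_j be a controlled unitary on ℂ^n ⊗ ℂ^m, where {|j⟩} is an orthonormal basis of ℂ^n and each U_j is a unitary on ℂ^m, and let C_U also denote the bipartite channel ρ ↦ C_U ρ C_Uᴴ (with A' = A = ℂ^n the control and B' = B = ℂ^m the target). Then the down-arrow conditional min-entropy of its Choi state satisfies S↓_∞(R_AA|R_BB)_{Φ^{C_U}} = −log dim span{vec(U_j) : 1 ≤ j ≤ n}, where vec(U) := ∑_i e_i ⊗ U e_i. -/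
open scoped ComplexOrder Kronecker
open Matrix

/-! The Choi state of `X ↦ C_U X C_Uᴴ` is pure: across the cut it is `|w⟩⟨w| / (nm)` with
`w = ∑ a, |a⟩|a⟩ ⊗ vec(U_a)`, and its marginal on `R_B B` is `M Mᴴ / (nm)`, where `M` is the matrix
with columns `vec(U_a)`. The scale cancels in `D_∞`, which becomes the log of the least `λ` with
`|⟨w, x⟩|² ≤ λ ⟨x, (1 ⊗ M Mᴴ) x⟩ = λ ∑ i a, ‖Mᴴ x_{ia}‖²` for all `x`. The vectors
`z_a := Mᴴ x_{aa}` lie in `K := range Mᴴ`, so `⟨w, x⟩ = ∑ a, ⟨e_a, z_a⟩ = ∑ a, ⟨P_K e_a, z_a⟩`, and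
Cauchy–Schwarz gives `|⟨w, x⟩|² ≤ (∑ a, ‖P_K e_a‖²) ∑ a, ‖z_a‖² = rank M · ∑ a, ‖z_a‖²`. The choice
`z_a = P_K e_a` (and `x_{ia} = 0` for `i ≠ a`) attains equality, so the least `λ` is `rank M`. -/

open scoped InnerProductSpace

section Projection

variable {𝕜 E ι : Type*} [RCLike 𝕜] [NormedAddCommGroup E] [InnerProductSpace 𝕜 E]
  [FiniteDimensional 𝕜 E] [Fintype ι]

theorem OrthonormalBasis.sum_norm_sq_starProjection (b : OrthonormalBasis ι 𝕜 E)
    (K : Submodule 𝕜 E) :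
    ∑ i, ‖K.starProjection (b i)‖ ^ 2 = Module.finrank 𝕜 K := by
  let f := stdOrthonormalBasis 𝕜 K
  calc ∑ i, ‖K.starProjection (b i)‖ ^ 2
      = ∑ i, ∑ j, ‖⟪(f j : E), b i⟫_𝕜‖ ^ 2 := by
        refine Fintype.sum_congr _ _ fun i => ?_
        rw [K.starProjection_apply, Submodule.norm_coe, ← f.sum_sq_norm_inner_right]
        simp only [Submodule.inner_orthogonalProjectionOnto_eq_of_mem_left]
    _ = ∑ j, ‖(f j : E)‖ ^ 2 := by
        rw [Finset.sum_comm]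
        exact Fintype.sum_congr _ _ fun j => b.sum_sq_norm_inner_left _
    _ = Module.finrank 𝕜 K := by
        simp only [Submodule.norm_coe, f.orthonormal.norm_eq_one]
        simp

theorem OrthonormalBasis.norm_sum_inner_sq_le (b : OrthonormalBasis ι 𝕜 E)
    (K : Submodule 𝕜 E) {z : ι → E} (hz : ∀ i, z i ∈ K) :
    ‖∑ i, ⟪b i, z i⟫_𝕜‖ ^ 2 ≤ Module.finrank 𝕜 K * ∑ i, ‖z i‖ ^ 2 := by
  have hproj (i : ι) : ⟪b i, z i⟫_𝕜 = ⟪K.starProjection (b i), z i⟫_𝕜 := by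
    rw [K.inner_starProjection_left_eq_right, K.starProjection_eq_self_iff.mpr (hz i)]
  calc ‖∑ i, ⟪b i, z i⟫_𝕜‖ ^ 2
      ≤ (∑ i, ‖K.starProjection (b i)‖ * ‖z i‖) ^ 2 := by
        simp only [hproj]
        gcongr
        exact norm_sum_le_of_le _ fun i _ => norm_inner_le_norm _ _
    _ ≤ (∑ i, ‖K.starProjection (b i)‖ ^ 2) * ∑ i, ‖z i‖ ^ 2 :=
        Finset.sum_mul_sq_le_sq_mul_sq _ _ _
    _ = Module.finrank 𝕜 K * ∑ i, ‖z i‖ ^ 2 := by rw [b.sum_norm_sq_starProjection]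

theorem OrthonormalBasis.sum_inner_starProjection (b : OrthonormalBasis ι 𝕜 E)
    (K : Submodule 𝕜 E) :
    ∑ i, ⟪b i, K.starProjection (b i)⟫_𝕜 = Module.finrank 𝕜 K := by
  have hsq (i : ι) :
      ⟪b i, K.starProjection (b i)⟫_𝕜 = (‖K.starProjection (b i)‖ : 𝕜) ^ 2 := by
    have hidem : K.starProjection (K.starProjection (b i)) = K.starProjection (b i) :=
      K.starProjection_eq_self_iff.mpr (K.starProjection_apply_mem _)
    conv_lhs => rw [← hidem, ← K.inner_starProjection_left_eq_right]
    exact inner_self_eq_norm_sq_to_K _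
  simp only [hsq]
  exact_mod_cast b.sum_norm_sq_starProjection K

end Projection

theorem Matrix.finrank_range_toEuclideanLin {𝕜 m n : Type*} [RCLike 𝕜] [Fintype m] [Fintype n]
    [DecidableEq n] (A : Matrix m n 𝕜) :
    Module.finrank 𝕜 (LinearMap.range (toEuclideanLin A)) = A.rank :=
  (A.rank_eq_finrank_range_toLin (EuclideanSpace.basisFun m 𝕜).toBasis
    (EuclideanSpace.basisFun n 𝕜).toBasis).symm

section MaxRelativeEntropy

variable {n : Type} [Fintype n]

theorem Dmax_eq_logb_of_forall_posSemidef_iff {ρ σ : Mat n} {r : ℝ} (hr : 0 < r)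
    (h : ∀ l : ℝ, 0 ≤ l → (((l : ℂ) • σ - ρ).PosSemidef ↔ r ≤ l)) :
    Dmax ρ σ = ((Real.logb 2 r : ℝ) : EReal) := by
  refine le_antisymm (sInf_le ⟨r, hr.le, (h r hr.le).2 le_rfl, rfl⟩) (le_sInf ?_)
  rintro _ ⟨l, hl, hpsd, rfl⟩
  exact EReal.coe_le_coe_iff.mpr (Real.logb_le_logb_of_le one_lt_two hr ((h l hl).1 hpsd))

omit [Fintype n] in
theorem posSemidef_ofReal_smul_iff {c : ℝ} (hc : 0 < c) (A : Mat n) :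
    ((c : ℂ) • A).PosSemidef ↔ A.PosSemidef := by
  refine ⟨fun h => ?_, fun h => h.smul (Complex.zero_le_real.mpr hc.le)⟩
  have := h.smul (a := ((c⁻¹ : ℝ) : ℂ)) (Complex.zero_le_real.mpr (inv_nonneg.mpr hc.le))
  rwa [smul_smul, ← Complex.ofReal_mul, inv_mul_cancel₀ hc.ne', Complex.ofReal_one,
    one_smul] at this

theorem Dmax_ofReal_smul_smul {c : ℝ} (hc : 0 < c) (ρ σ : Mat n) :
    Dmax ((c : ℂ) • ρ) ((c : ℂ) • σ) = Dmax ρ σ := by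
  have h (l : ℝ) : (l : ℂ) • (c : ℂ) • σ - (c : ℂ) • ρ = (c : ℂ) • ((l : ℂ) • σ - ρ) := by
    rw [smul_sub, smul_comm]
  simp only [Dmax, h, posSemidef_ofReal_smul_iff hc]

theorem star_dotProduct_outer_mulVec (w x : n → ℂ) :
    star x ⬝ᵥ (outer w *ᵥ x) = ((‖star w ⬝ᵥ x‖ ^ 2 : ℝ) : ℂ) := by
  rw [outer, vecMulVec_mulVec]
  push_cast
  rw [← Complex.mul_conj']
  simp [dotProduct_smul, star_dotProduct x w]

theorem posSemidef_smul_sub_outer_iff {σ : Mat n} (hσ : σ.IsHermitian) (w : n → ℂ) (l : ℝ) :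
    ((l : ℂ) • σ - outer w).PosSemidef ↔
      ∀ x, ‖star w ⬝ᵥ x‖ ^ 2 ≤ l * (star x ⬝ᵥ (σ *ᵥ x)).re := by
  have hquad (x : n → ℂ) : star x ⬝ᵥ (((l : ℂ) • σ - outer w) *ᵥ x) =
      ((l * (star x ⬝ᵥ (σ *ᵥ x)).re - ‖star w ⬝ᵥ x‖ ^ 2 : ℝ) : ℂ) := by
    rw [sub_mulVec, dotProduct_sub, smul_mulVec, dotProduct_smul, star_dotProduct_outer_mulVec]
    have him : (star x ⬝ᵥ (σ *ᵥ x)).im = 0 := hσ.im_star_dotProduct_mulVec_self x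
    conv_lhs => rw [← Complex.re_add_im (star x ⬝ᵥ (σ *ᵥ x)), him]
    push_cast
    simp
  have hherm : ((l : ℂ) • σ - outer w).IsHermitian :=
    (hσ.smul (Complex.conj_ofReal l)).sub (posSemidef_vecMulVec_self_star w).isHermitian
  simp only [posSemidef_iff_dotProduct_mulVec, hherm, true_and, hquad, Complex.zero_le_real,
    sub_nonneg]

end MaxRelativeEntropy

theorem star_dotProduct_mul_conjTranspose_mulVec {ι κ : Type} [Fintype ι] [Fintype κ]
    (M : Matrix κ ι ℂ) (y : κ → ℂ) :
    star y ⬝ᵥ ((M * Mᴴ) *ᵥ y) = ((‖WithLp.toLp 2 (Mᴴ *ᵥ y)‖ ^ 2 : ℝ) : ℂ) := by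
  rw [← mulVec_mulVec, dotProduct_mulVec,
    show star y ᵥ* M = star (Mᴴ *ᵥ y) by simp [star_mulVec], EuclideanSpace.norm_sq_eq]
  simp [dotProduct, Complex.mul_conj', mul_comm]

theorem star_dotProduct_one_kronecker_mulVec {ι κ : Type} [Fintype ι] [DecidableEq ι]
    [Fintype κ] (A : Mat κ) (x : ι × κ → ℂ) :
    star x ⬝ᵥ ((1 ⊗ₖ A) *ᵥ x) =
      ∑ i, star (fun k => x (i, k)) ⬝ᵥ (A *ᵥ fun k => x (i, k)) := by
  simp [dotProduct, mulVec, Fintype.sum_prod_type, one_apply, Finset.mul_sum]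

theorem sum_diag_le_sum_of_nonneg {ι : Type} [Fintype ι] {f : ι × ι → ℝ} (hf : 0 ≤ f) :
    ∑ a, f (a, a) ≤ ∑ p, f p := by
  rw [Fintype.sum_prod_type]
  exact Finset.sum_le_sum fun a _ =>
    Finset.single_le_sum (f := fun b => f (a, b)) (fun b _ => hf _) (Finset.mem_univ a)

section CtrlVec

variable {ι κ : Type} [Fintype ι] [DecidableEq ι] [Fintype κ]

/-- `∑ a, |a⟩|a⟩ ⊗ M e_a`: the Choi vector, across the cut `R_A A : R_B B`, of the controlled
operator `∑ a, |a⟩⟨a| ⊗ V_a` with `vec(V_a) = M e_a`. -/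
def ctrlVec (M : Matrix κ ι ℂ) : (ι × ι) × κ → ℂ :=
  fun p => if p.1.1 = p.1.2 then M p.2 p.1.1 else 0

omit [Fintype κ] in
theorem trFst_outer_ctrlVec (M : Matrix κ ι ℂ) : trFst (outer (ctrlVec M)) = M * Mᴴ := by
  ext k k'
  simp [trFst, outer, ctrlVec, Matrix.mul_apply, Fintype.sum_prod_type, vecMulVec_apply]

theorem star_ctrlVec_dotProduct (M : Matrix κ ι ℂ) (x : (ι × ι) × κ → ℂ) :
    star (ctrlVec M) ⬝ᵥ x = ∑ a, (Mᴴ *ᵥ fun k => x ((a, a), k)) a := by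
  simp [ctrlVec, dotProduct, mulVec, Fintype.sum_prod_type, apply_ite, ite_mul]

theorem norm_sq_star_ctrlVec_dotProduct_le (M : Matrix κ ι ℂ) (x : (ι × ι) × κ → ℂ) :
    ‖star (ctrlVec M) ⬝ᵥ x‖ ^ 2 ≤
      M.rank * ∑ p, ‖WithLp.toLp 2 (Mᴴ *ᵥ fun k => x (p, k))‖ ^ 2 := by
  classical
  let K := LinearMap.range (toEuclideanLin Mᴴ)
  let z (a : ι) : EuclideanSpace ℂ ι := WithLp.toLp 2 (Mᴴ *ᵥ fun k => x ((a, a), k))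
  have hz (a : ι) : z a ∈ K := ⟨WithLp.toLp 2 fun k => x ((a, a), k), rfl⟩
  calc ‖star (ctrlVec M) ⬝ᵥ x‖ ^ 2
      = ‖∑ a, ⟪EuclideanSpace.basisFun ι ℂ a, z a⟫_ℂ‖ ^ 2 := by
        simp only [EuclideanSpace.basisFun_inner, z, star_ctrlVec_dotProduct]
    _ ≤ Module.finrank ℂ K * ∑ a, ‖z a‖ ^ 2 :=
        (EuclideanSpace.basisFun ι ℂ).norm_sum_inner_sq_le K hz
    _ ≤ M.rank * ∑ p, ‖WithLp.toLp 2 (Mᴴ *ᵥ fun k => x (p, k))‖ ^ 2 := by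
        rw [Matrix.finrank_range_toEuclideanLin, rank_conjTranspose]
        gcongr
        exact sum_diag_le_sum_of_nonneg
          (f := fun p => ‖WithLp.toLp 2 (Mᴴ *ᵥ fun k => x (p, k))‖ ^ 2) fun p => sq_nonneg _

theorem exists_star_ctrlVec_dotProduct_eq_rank (M : Matrix κ ι ℂ) :
    ∃ x : (ι × ι) × κ → ℂ, star (ctrlVec M) ⬝ᵥ x = M.rank ∧
      ∑ p, ‖WithLp.toLp 2 (Mᴴ *ᵥ fun k => x (p, k))‖ ^ 2 = M.rank := by
  classical
  let K := LinearMap.range (toEuclideanLin Mᴴ)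
  let e := EuclideanSpace.basisFun ι ℂ
  choose y hy using fun a => K.starProjection_apply_mem (e a)
  let x : (ι × ι) × κ → ℂ := fun p => if p.1.1 = p.1.2 then y p.1.1 p.2 else 0
  have hx (p : ι × ι) : WithLp.toLp 2 (Mᴴ *ᵥ fun k => x (p, k)) =
      if p.1 = p.2 then K.starProjection (e p.1) else 0 := by
    split_ifs with h
    · rw [← hy]
      simp only [x, if_pos h]
      rfl
    · simp only [x, h, if_false]
      exact congrArg (WithLp.toLp 2) (mulVec_zero Mᴴ)
  have hrank : Module.finrank ℂ K = M.rank := by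
    rw [Matrix.finrank_range_toEuclideanLin, rank_conjTranspose]
  refine ⟨x, ?_, ?_⟩
  · rw [← hrank, ← e.sum_inner_starProjection K, star_ctrlVec_dotProduct]
    refine Fintype.sum_congr _ _ fun a => ?_
    rw [EuclideanSpace.basisFun_inner]
    simpa using congrArg (fun v : EuclideanSpace ℂ ι => v a) (hx (a, a))
  · simp only [hx, apply_ite, norm_zero, ite_pow, zero_pow two_ne_zero, Fintype.sum_prod_type,
      Finset.sum_ite_eq, Finset.mem_univ, if_true]
    rw [e.sum_norm_sq_starProjection, hrank]

theorem Dmax_outer_ctrlVec (M : Matrix κ ι ℂ) (hM : 0 < M.rank) :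
    Dmax (outer (ctrlVec M)) (1 ⊗ₖ (M * Mᴴ)) = ((Real.logb 2 M.rank : ℝ) : EReal) := by
  have hσ : (1 ⊗ₖ (M * Mᴴ) : Mat ((ι × ι) × κ)).IsHermitian :=
    (PosSemidef.one.kronecker (posSemidef_self_mul_conjTranspose M)).isHermitian
  have hquad (x : (ι × ι) × κ → ℂ) : (star x ⬝ᵥ ((1 ⊗ₖ (M * Mᴴ)) *ᵥ x)).re =
      ∑ p, ‖WithLp.toLp 2 (Mᴴ *ᵥ fun k => x (p, k))‖ ^ 2 := by
    simp only [star_dotProduct_one_kronecker_mulVec, star_dotProduct_mul_conjTranspose_mulVec,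
      ← Complex.ofReal_sum, Complex.ofReal_re]
  refine Dmax_eq_logb_of_forall_posSemidef_iff (by exact_mod_cast hM) fun l hl => ?_
  simp only [posSemidef_smul_sub_outer_iff hσ, hquad]
  constructor
  · intro h
    obtain ⟨x, hx, hnorm⟩ := exists_star_ctrlVec_dotProduct_eq_rank M
    have := h x
    rw [hx, hnorm, Complex.norm_natCast] at this
    nlinarith [(Nat.cast_pos (α := ℝ)).mpr hM]
  · intro hrl x
    exact (norm_sq_star_ctrlVec_dotProduct_le M x).trans
      (mul_le_mul_of_nonneg_right hrl (Finset.sum_nonneg fun p _ => sq_nonneg _))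

end CtrlVec

theorem trFst_smul_s11 {ιA ιB : Type} [Fintype ιA] (c : ℂ) (ρ : Matrix (ιA × ιB) (ιA × ιB) ℂ) :
    trFst (c • ρ) = c • trFst ρ := by
  ext i j
  simp [trFst, Finset.mul_sum]

theorem choiMatrix_conjMap {ι κ : Type} [Fintype ι] [DecidableEq ι] (W : Matrix κ ι ℂ) :
    choiMatrix (conjMap W) = outer (vecRect W) := by
  ext p q
  simp [choiMatrix, conjMap, outer, vecRect, mul_apply, single_apply, vecMulVec_apply, ite_and]

theorem biChoiState_conjMap {ιA' ιB' κA κB : Type} [Fintype ιA'] [DecidableEq ιA']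
    [Fintype ιB'] [DecidableEq ιB'] (W : Matrix (κA × κB) (ιA' × ιB') ℂ) :
    biChoiState (conjMap W) = ((Fintype.card (ιA' × ιB') : ℂ))⁻¹ •
      outer (vecRect W ∘ Equiv.prodProdProdComm ιA' κA ιB' κB) := by
  ext p q
  simp [biChoiState, choiState, choiMatrix_conjMap, outer, vecMulVec_apply]

theorem vecRect_ctrlU_comp {n m : ℕ} (U : Fin n → Mat (Fin m)) :
    vecRect (ctrlU U) ∘ Equiv.prodProdProdComm (Fin n) (Fin n) (Fin m) (Fin m) =
      ctrlVec (Matrix.of fun j => vecRect (U j))ᵀ := by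
  ext ⟨⟨i, a⟩, r, b⟩
  by_cases h : i = a
  · subst h; simp [vecRect, ctrlU, ctrlVec]
  · simp [vecRect, ctrlU, ctrlVec, h, Ne.symm h]

theorem vecRect_ne_zero_of_mem_unitaryGroup {ι : Type} [Fintype ι] [DecidableEq ι] [Nonempty ι]
    {V : Mat ι} (hV : V ∈ unitaryGroup ι ℂ) : vecRect V ≠ 0 := by
  intro h
  have hV0 : V = 0 := by
    ext i j
    simpa [vecRect] using congrFun h (j, i)
  simpa [hV0] using mem_unitaryGroup_iff.mp hV

/-- For a controlled unitary `C_U = ∑ j, |j⟩⟨j| ⊗ U_j` on `ℂ^n ⊗ ℂ^m`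
viewed as a bipartite channel `ρ ↦ C_U ρ C_Uᴴ`, the down-arrow conditional min-entropy of
its Choi state equals `−log₂ dim span{vec(U_j)}`. -/
theorem controlled_unitary_choi_condMinDown
    {n m : ℕ} [NeZero n] [NeZero m] (U : Fin n → Mat (Fin m))
    (hU : ∀ j, U j ∈ Matrix.unitaryGroup (Fin m) ℂ) :
    condMinDown (biChoiState (conjMap (ctrlU U))) =
      (((-Real.logb 2
          ((Module.finrank ℂ (Submodule.span ℂ (Set.range fun j => vecRect (U j)))) : ℝ)) :
        ℝ) : EReal) := by
  set M : Matrix (Fin m × Fin m) (Fin n) ℂ := (Matrix.of fun j => vecRect (U j))ᵀ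
  have hrank : M.rank = Module.finrank ℂ (Submodule.span ℂ (Set.range fun j => vecRect (U j))) :=
    M.rank_eq_finrank_span_cols
  have hrank_pos : 0 < M.rank := by
    rw [hrank, Nat.pos_iff_ne_zero, Ne, Submodule.finrank_eq_zero, Submodule.span_eq_bot]
    exact fun h => vecRect_ne_zero_of_mem_unitaryGroup (hU 0) (h _ ⟨0, rfl⟩)
  set c : ℝ := ((Fintype.card (Fin n × Fin m) : ℝ))⁻¹
  have hc : 0 < c := by positivity
  have hρ : biChoiState (conjMap (ctrlU U)) = (c : ℂ) • outer (ctrlVec M) := by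
    rw [biChoiState_conjMap, vecRect_ctrlU_comp]
    push_cast [c]
    rfl
  rw [condMinDown, hρ, trFst_smul_s11, trFst_outer_ctrlVec, kronecker_smul,
    Dmax_ofReal_smul_smul hc, Dmax_outer_ctrlVec M hrank_pos, hrank, EReal.coe_neg]
end
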